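/- arXiv:1309.1264 — 3 statements merged into one kernel-verified Lean document; each statement's English description precedes it below -/
import Mathlib

section
/- RLEM 4-289 is equivalent to the rotary element: there exist bijections α : {H, V} → {q₀, q₁}, β : {n, e, s, w} → {a, b, c, d}, γ : {n', e', s', w'} → {s, t, u, v} such that for all states p and inputs x, δ_{4-289}(α(p), β(x)) = (α(p'), γ(y)) whenever δ_RE(p, x) = (p', y). -/
inductive REState | H | V
  deriving DecidableEq
instance : Fintype REState := Fintype.ofList [.H, .V] (fun x => by cases x <;> decide)
inductive REIn | n | e | s | w
  deriving DecidableEq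
instance : Fintype REIn := Fintype.ofList [.n, .e, .s, .w] (fun x => by cases x <;> decide)
inductive REOut | n' | e' | s' | w'
  deriving DecidableEq
instance : Fintype REOut := Fintype.ofList [.n', .e', .s', .w'] (fun x => by cases x <;> decide)

/-- The move function `δ_RE` of the rotary element. -/
def deltaRE : REState × REIn → REState × REOut
  | (.H, .n) => (.V, .w')
  | (.H, .e) => (.H, .w')
  | (.H, .s) => (.V, .e')
  | (.H, .w) => (.H, .e')
  | (.V, .n) => (.V, .s')
  | (.V, .e) => (.H, .n')
  | (.V, .s) => (.V, .n')
  | (.V, .w) => (.H, .s')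

inductive St289 | q0 | q1
  deriving DecidableEq
instance : Fintype St289 := Fintype.ofList [.q0, .q1] (fun x => by cases x <;> decide)
inductive In289 | a | b | c | d
  deriving DecidableEq
instance : Fintype In289 := Fintype.ofList [.a, .b, .c, .d] (fun x => by cases x <;> decide)
inductive Out289 | s | t | u | v
  deriving DecidableEq
instance : Fintype Out289 := Fintype.ofList [.s, .t, .u, .v] (fun x => by cases x <;> decide)

/-- The move function of RLEM 4-289. -/
def delta289 : St289 × In289 → St289 × Out289
  | (.q0, .a) => (.q0, .s)
  | (.q0, .b) => (.q0, .t)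
  | (.q0, .c) => (.q1, .s)
  | (.q0, .d) => (.q1, .t)
  | (.q1, .a) => (.q0, .u)
  | (.q1, .b) => (.q0, .v)
  | (.q1, .c) => (.q1, .v)
  | (.q1, .d) => (.q1, .u)

def REState.equiv289 : REState ≃ St289 where
  toFun | .H => .q0 | .V => .q1
  invFun | .q0 => .H | .q1 => .V
  left_inv := by decide
  right_inv := by decide

/- The inputs that switch the state (`n`, `s` in `H`; `e`, `w` in `V`) go to those of 4-289
(`c`, `d` in `q₀`; `a`, `b` in `q₁`); the outputs are then read off the table. -/
def REIn.equiv289 : REIn ≃ In289 where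
  toFun | .n => .c | .e => .a | .s => .d | .w => .b
  invFun | .a => .e | .b => .w | .c => .n | .d => .s
  left_inv := by decide
  right_inv := by decide

def REOut.equiv289 : REOut ≃ Out289 where
  toFun | .n' => .u | .e' => .t | .s' => .v | .w' => .s
  invFun | .s => .w' | .t => .e' | .u => .n' | .v => .s'
  left_inv := by decide
  right_inv := by decide

/-- RLEM 4-289 is equivalent to the rotary element: there are bijective
renamings of states, input symbols and output symbols transforming `δ_RE` into `δ_{4-289}`. -/
theorem rlem4_289_equiv_RE :
    ∃ (α : REState ≃ St289) (β : REIn ≃ In289) (γ : REOut ≃ Out289),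
      ∀ (p : REState) (x : REIn),
        delta289 (α p, β x) = (α (deltaRE (p, x)).1, γ (deltaRE (p, x)).2) :=
  ⟨REState.equiv289, REIn.equiv289, REOut.equiv289, by decide⟩
end

section
/- In a circuit C of m copies of RLEM 2-2 with connection function f and closure set W as defined, the external input b lies in the complement W̄ = (U ∪ V) − W, and exactly one of the external outputs s, t lies in W (the other in W̄). -/
/-- Vertices of a circuit of `m` copies of RLEM 2-2 (as in Statement 9). -/
inductive CPort (m : ℕ)
  | extIn : Bool → CPort m
  | extOut : Bool → CPort m
  | elemIn : Fin m → Bool → CPort m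
  | elemOut : Fin m → Bool → CPort m
  deriving DecidableEq

/-- `U = {a, b} ∪ {sᵢ, tᵢ}`. -/
def Uset (m : ℕ) : Set (CPort m) :=
  {p | (∃ x, p = .extIn x) ∨ ∃ i x, p = .elemOut i x}

/-- `V = {s, t} ∪ {aᵢ, bᵢ}`. -/
def Vset (m : ℕ) : Set (CPort m) :=
  {p | (∃ x, p = .extOut x) ∨ ∃ i x, p = .elemIn i x}

/-- Closure conditions defining `W` (containing `a = extIn false`). -/
def ClosedSet (m : ℕ) (f : CPort m → CPort m) (S : Set (CPort m)) : Prop :=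
  (CPort.extIn false ∈ S) ∧
  (∀ x ∈ Uset m ∩ S, f x ∈ S) ∧
  (∀ i : Fin m, CPort.elemIn i false ∈ S → CPort.elemOut i false ∈ S) ∧
  (∀ i : Fin m, CPort.elemIn i true ∈ S → CPort.elemOut i true ∈ S)

/-- The smallest closed set `W`. -/
def Wset (m : ℕ) (f : CPort m → CPort m) : Set (CPort m) :=
  ⋂₀ {S | ClosedSet m f S}

/-!
`W` is the set of ports reached from `a` by the signal step: `p ↦ f p` on `U`, and `aᵢ ↦ sᵢ`,
`bᵢ ↦ tᵢ`; only `s` and `t` have no successor. As `f` is injective with values in `V`, every port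
has at most one predecessor and `a`, `b` have none. In a finite set the walk from `a` must reach a
dead end, for otherwise the successor map would inject the visited set into itself while missing
`a`. The step is deterministic, so the dead end reached is unique, and `b` is never visited.
-/

namespace Relation

variable {α : Type*} {r : α → α → Prop} {a b c : α}

theorem ReflTransGen.exists_forall_not_of_leftUnique [Finite α] (hr : Relator.LeftUnique r)
    (ha : ∀ x, ¬ r x a) : ∃ b, ReflTransGen r a b ∧ ∀ c, ¬ r b c := by
  by_contra! hsucc
  choose next hnext using hsucc
  let step : {b // ReflTransGen r a b} → {b // ReflTransGen r a b} :=
    fun b => ⟨next b.1 b.2, b.2.tail (hnext b.1 b.2)⟩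
  have hinj : Function.Injective step := fun b c h => by
    have hbc : next b.1 b.2 = next c.1 c.2 := congrArg Subtype.val h
    exact Subtype.ext (hr (hnext b.1 b.2) (hbc ▸ hnext c.1 c.2))
  obtain ⟨b, hb⟩ := Finite.surjective_of_injective hinj ⟨a, .refl⟩
  have hba : next b.1 b.2 = a := congrArg Subtype.val hb
  exact ha _ (hba ▸ hnext b.1 b.2)

theorem ReflTransGen.eq_of_forall_not_of_rightUnique (hr : Relator.RightUnique r)
    (hb : ReflTransGen r a b) (hc : ReflTransGen r a c)
    (hb_end : ∀ d, ¬ r b d) (hc_end : ∀ d, ¬ r c d) : b = c := by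
  rcases hb.total_of_right_unique hr hc with hbc | hcb
  · rcases cases_head_iff.mp hbc with rfl | ⟨d, hbd, -⟩
    · rfl
    · exact absurd hbd (hb_end d)
  · rcases cases_head_iff.mp hcb with rfl | ⟨d, hcd, -⟩
    · rfl
    · exact absurd hcd (hc_end d)

theorem ReflTransGen.eq_of_forall_not_rel (hb : ReflTransGen r a b) (hpred : ∀ x, ¬ r x b) :
    b = a := by
  rcases hb.cases_tail with rfl | ⟨c, -, hcb⟩
  · rfl
  · exact absurd hcb (hpred c)

end Relation

open Relation

namespace CPort

variable {m : ℕ}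

instance : Finite (CPort m) :=
  Finite.of_injective
    (fun p : CPort m => match p with
      | .extIn x => (Sum.inl (Sum.inl x) : (Bool ⊕ Bool) ⊕ ((Fin m × Bool) ⊕ (Fin m × Bool)))
      | .extOut x => Sum.inl (Sum.inr x)
      | .elemIn i x => Sum.inr (Sum.inl (i, x))
      | .elemOut i x => Sum.inr (Sum.inr (i, x)))
    (by intro p q h; cases p <;> cases q <;> simp_all)

theorem extIn_mem_Uset (x : Bool) : extIn x ∈ Uset m := Or.inl ⟨x, rfl⟩

theorem elemOut_mem_Uset (i : Fin m) (x : Bool) : elemOut i x ∈ Uset m :=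
  Or.inr ⟨i, x, rfl⟩

theorem extIn_not_mem_Vset (x : Bool) : extIn x ∉ Vset m := by simp [Vset]

theorem elemOut_not_mem_Vset (i : Fin m) (x : Bool) : elemOut i x ∉ Vset m := by
  simp [Vset]

inductive Step (f : CPort m → CPort m) : CPort m → CPort m → Prop
  | connect {p : CPort m} : p ∈ Uset m → Step f p (f p)
  | traverse (i : Fin m) (x : Bool) : Step f (elemIn i x) (elemOut i x)

variable {f : CPort m → CPort m}

theorem closedSet_iff {S : Set (CPort m)} :
    ClosedSet m f S ↔ extIn false ∈ S ∧ ∀ p q, Step f p q → p ∈ S → q ∈ S := by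
  refine ⟨fun ⟨ha, hU, hfalse, htrue⟩ => ⟨ha, ?_⟩, fun ⟨ha, hstep⟩ => ⟨ha, ?_, ?_, ?_⟩⟩
  · rintro p q (hp | ⟨i, _ | _⟩) hpS
    exacts [hU p ⟨hp, hpS⟩, hfalse i hpS, htrue i hpS]
  · exact fun p ⟨hp, hpS⟩ => hstep p _ (.connect hp) hpS
  · exact fun i => hstep _ _ (.traverse i false)
  · exact fun i => hstep _ _ (.traverse i true)

theorem Wset_eq_setOf_reflTransGen :
    Wset m f = {p | ReflTransGen (Step f) (extIn false) p} := by
  apply Set.Subset.antisymm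
  · refine Set.sInter_subset_of_mem (closedSet_iff.mpr ⟨.refl, fun p q hpq hp => ?_⟩)
    exact ReflTransGen.tail hp hpq
  · intro p hp S hS
    obtain ⟨ha, hstep⟩ := closedSet_iff.mp hS
    induction hp with
    | refl => exact ha
    | tail _ hpq ih => exact hstep _ _ hpq ih

theorem step_iff {p q : CPort m} :
    Step f p q ↔ p ∈ Uset m ∧ q = f p ∨ ∃ i x, p = elemIn i x ∧ q = elemOut i x := by
  constructor
  · rintro (hp | ⟨i, x⟩)
    exacts [Or.inl ⟨hp, rfl⟩, Or.inr ⟨i, x, rfl, rfl⟩]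
  · rintro (⟨hp, rfl⟩ | ⟨i, x, rfl, rfl⟩)
    exacts [.connect hp, .traverse i x]

theorem Step.rightUnique : Relator.RightUnique (Step f) := by
  rintro p q q' (hp | _) (hp' | _)
  · rfl
  · simp [Uset] at hp
  · simp [Uset] at hp'
  · rfl

theorem Step.leftUnique (hmaps : Set.MapsTo f (Uset m) (Vset m)) (hinj : Set.InjOn f (Uset m)) :
    Relator.LeftUnique (Step f) := by
  intro p p' q h h'
  rcases step_iff.mp h with ⟨hp, rfl⟩ | ⟨i, x, rfl, rfl⟩ <;>
    rcases step_iff.mp h' with ⟨hp', hq⟩ | ⟨j, y, rfl, hq⟩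
  · exact hinj hp hp' hq
  · exact absurd (hq ▸ hmaps hp) (elemOut_not_mem_Vset j y)
  · exact absurd (hq ▸ hmaps hp') (elemOut_not_mem_Vset i x)
  · cases hq; rfl

theorem Step.not_extIn (hmaps : Set.MapsTo f (Uset m) (Vset m)) (p : CPort m) (x : Bool) :
    ¬ Step f p (extIn x) := by
  intro h
  rcases step_iff.mp h with ⟨hp, hq⟩ | ⟨i, y, -, hq⟩
  · exact extIn_not_mem_Vset x (hq ▸ hmaps hp)
  · cases hq

theorem Step.not_extOut (x : Bool) (q : CPort m) : ¬ Step f (extOut x) q := by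
  rintro (hp | _)
  simp [Uset] at hp

theorem exists_eq_extOut_of_forall_not_step {p : CPort m} (hp : ∀ q, ¬ Step f p q) :
    ∃ x, p = extOut x := by
  cases p with
  | extOut x => exact ⟨x, rfl⟩
  | extIn x => exact absurd (.connect (extIn_mem_Uset x)) (hp _)
  | elemOut i x => exact absurd (.connect (elemOut_mem_Uset i x)) (hp _)
  | elemIn i x => exact absurd (.traverse i x) (hp _)

end CPort

open CPort

theorem b_not_in_W_and_one_output_in_W_general (m : ℕ) (f : CPort m → CPort m)
    (hmaps : Set.MapsTo f (Uset m) (Vset m))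
    (hinj : Set.InjOn f (Uset m)) :
    CPort.extIn true ∉ Wset m f ∧
      (Xor' (CPort.extOut false ∈ Wset m f) (CPort.extOut true ∈ Wset m f)) := by
  simp only [Wset_eq_setOf_reflTransGen, Set.mem_ofPred_eq]
  refine ⟨fun hb => absurd (hb.eq_of_forall_not_rel (Step.not_extIn hmaps · true)) (by simp), ?_⟩
  obtain ⟨p, hp, hp_end⟩ := ReflTransGen.exists_forall_not_of_leftUnique
    (Step.leftUnique hmaps hinj) (Step.not_extIn hmaps · false)
  obtain ⟨x, rfl⟩ := exists_eq_extOut_of_forall_not_step hp_end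
  have hunique : ∀ y, ReflTransGen (Step f) (extIn false) (extOut y) → y = x := fun y hy =>
    extOut.inj (hy.eq_of_forall_not_of_rightUnique Step.rightUnique hp
      (Step.not_extOut y) (Step.not_extOut x))
  cases x with
  | false => exact Or.inl ⟨hp, fun h => Bool.noConfusion (hunique true h)⟩
  | true => exact Or.inr ⟨hp, fun h => Bool.noConfusion (hunique false h)⟩

/-- if the connection function `f` maps `U` bijectively onto `V`, then the
external input `b` lies outside `W`, and exactly one of the external outputs `s, t`
lies in `W` (the other in its complement). -/
theorem b_not_in_W_and_one_output_in_W (m : ℕ) (f : CPort m → CPort m)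
    (hmaps : Set.MapsTo f (Uset m) (Vset m))
    (hinj : Set.InjOn f (Uset m))
    (hsurj : Set.SurjOn f (Uset m) (Vset m)) :
    CPort.extIn true ∉ Wset m f ∧
      (Xor' (CPort.extOut false ∈ Wset m f) (CPort.extOut true ∈ Wset m f)) :=
  b_not_in_W_and_one_output_in_W_general m f hmaps hinj
end

section
/- Let δ : Q × Σ → Q × Γ be a bijection with |Q| = 2 and |Σ| = |Γ| = k ≥ 3. Fix an output symbol y₀ ∈ Γ and an input symbol x₀ ∈ Σ and form the feedback machine on alphabet Σ − {x₀} and Γ − {y₀}: from state q on input x ∈ Σ − {x₀}, repeatedly apply δ, feeding output y₀ back as input x₀, until an output in Γ − {y₀} is produced. If this process always terminates, the resulting move function δ' : Q × (Σ − {x₀}) → Q × (Γ − {y₀}) is injective. -/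
/-!
Feedback keeps the machine reversible. The feedback step `F` fixes every pair whose output is
not `y₀`, so a run may be shortened until all its pairs but the last have output `y₀`; on those
pairs `F` acts as `δ (·, x₀)`, hence injectively, and no start value `δ (q, x)` with `x ≠ x₀` is
reached from them. Two runs with the same result can therefore be traced back step by step to a
common start value, and injectivity of `δ` finishes the proof.
-/

/-- The one-step feedback map: a pair `(q, y)` with `y = y₀` is fed back as input `x₀`;
pairs with `y ≠ y₀` are final (fixed). -/
def fbStep {Q Sigma Gamma : Type} [DecidableEq Gamma]
    (δ : Q × Sigma → Q × Gamma) (y₀ : Gamma) (x₀ : Sigma) :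
    Q × Gamma → Q × Gamma :=
  fun p => if p.2 = y₀ then δ (p.1, x₀) else p

namespace Function

variable {α : Type*} {f : α → α} {S : Set α}

theorem exists_iterate_eq_of_isFixedPt_compl (hfix : ∀ p ∉ S, IsFixedPt f p) {a c : α}
    {n : ℕ} (h : f^[n] a = c) : ∃ n', f^[n'] a = c ∧ ∀ i < n', f^[i] a ∈ S := by
  induction n generalizing a with
  | zero => exact ⟨0, h, by simp⟩
  | succ n ih =>
    rw [iterate_succ_apply] at h
    by_cases ha : a ∈ S
    · obtain ⟨n', hn', hpre⟩ := ih h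
      refine ⟨n' + 1, by rwa [iterate_succ_apply], fun i hi => ?_⟩
      cases i with
      | zero => exact ha
      | succ i => exact iterate_succ_apply f i a ▸ hpre i (by omega)
    · rw [hfix a ha] at h
      exact ih h

theorem eq_of_iterate_eq_of_injOn (hinj : S.InjOn f) {a b : α} (ha : a ∉ f '' S)
    (hb : b ∉ f '' S) {n m : ℕ} (han : ∀ i < n, f^[i] a ∈ S) (hbm : ∀ i < m, f^[i] b ∈ S)
    (h : f^[n] a = f^[m] b) : a = b := by
  induction n generalizing m with
  | zero =>
    cases m with
    | zero => exact h
    | succ m =>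
      rw [iterate_succ_apply'] at h
      exact absurd ⟨_, hbm m m.lt_succ_self, h.symm⟩ ha
  | succ n ih =>
    cases m with
    | zero =>
      rw [iterate_succ_apply'] at h
      exact absurd ⟨_, han n n.lt_succ_self, h⟩ hb
    | succ m =>
      rw [iterate_succ_apply', iterate_succ_apply'] at h
      exact ih (fun i hi => han i (by omega)) (fun i hi => hbm i (by omega))
        (hinj (han n n.lt_succ_self) (hbm m m.lt_succ_self) h)

theorem eq_of_iterate_eq_of_isFixedPt_compl (hfix : ∀ p ∉ S, IsFixedPt f p)
    (hinj : S.InjOn f) {a b : α} (ha : a ∉ f '' S) (hb : b ∉ f '' S) {n m : ℕ}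
    (h : f^[n] a = f^[m] b) : a = b := by
  obtain ⟨n', hn', han⟩ := exists_iterate_eq_of_isFixedPt_compl hfix h
  obtain ⟨m', hm', hbm⟩ := exists_iterate_eq_of_isFixedPt_compl hfix (rfl : f^[m] b = _)
  exact eq_of_iterate_eq_of_injOn hinj ha hb han hbm (hn'.trans hm'.symm)

end Function

section Feedback

variable {Q Sigma Gamma : Type} [DecidableEq Gamma] {δ : Q × Sigma → Q × Gamma}
  {y₀ : Gamma} {x₀ : Sigma}

theorem fbStep_isFixedPt {p : Q × Gamma} (hp : p.2 ≠ y₀) :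
    Function.IsFixedPt (fbStep δ y₀ x₀) p :=
  if_neg hp

theorem fbStep_injOn (hδ : Function.Injective δ) :
    Set.InjOn (fbStep δ y₀ x₀) {p | p.2 = y₀} := by
  intro p hp p' hp' h
  simp only [fbStep, if_pos (show p.2 = y₀ from hp), if_pos (show p'.2 = y₀ from hp')] at h
  exact Prod.ext (Prod.ext_iff.mp (hδ h)).1 (hp.trans hp'.symm)

theorem apply_notMem_image_fbStep (hδ : Function.Injective δ) (q : Q) {x : Sigma}
    (hx : x ≠ x₀) : δ (q, x) ∉ fbStep δ y₀ x₀ '' {p | p.2 = y₀} := by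
  rintro ⟨p, hp, h⟩
  simp only [fbStep, if_pos (show p.2 = y₀ from hp)] at h
  exact hx (Prod.ext_iff.mp (hδ h)).2.symm

end Feedback

theorem feedback_move_function_injective_general
    (Q Sigma Gamma : Type)
    [DecidableEq Gamma]
    (δ : Q × Sigma → Q × Gamma) (hδ : Function.Bijective δ)
    (x₀ : Sigma) (y₀ : Gamma)
    (δ' : Q × {x : Sigma // x ≠ x₀} → Q × {y : Gamma // y ≠ y₀})
    (hspec : ∀ (q : Q) (x : {x : Sigma // x ≠ x₀}), ∃ n : ℕ,
      (fbStep δ y₀ x₀)^[n] (δ (q, x.val)) = ((δ' (q, x)).1, (δ' (q, x)).2.val)) :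
    Function.Injective δ' := by
  rintro ⟨q, x⟩ ⟨q', x'⟩ h
  obtain ⟨n, hn⟩ := hspec q x
  obtain ⟨m, hm⟩ := hspec q' x'
  have hstart : δ (q, x.val) = δ (q', x'.val) :=
    Function.eq_of_iterate_eq_of_isFixedPt_compl (fun _ hp => fbStep_isFixedPt hp)
      (fbStep_injOn hδ.1) (apply_notMem_image_fbStep hδ.1 q x.2)
      (apply_notMem_image_fbStep hδ.1 q' x'.2) (by rw [hn, hm, h])
  obtain ⟨hq, hx⟩ := Prod.ext_iff.mp (hδ.1 hstart)
  exact Prod.ext hq (Subtype.ext hx)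

/-- let `δ : Q × Σ → Q × Γ` be a bijection, `|Q| = 2`, `|Σ| = |Γ| = k ≥ 3`,
and fix a feedback pair `(y₀, x₀)`.  Suppose the feedback process always terminates, and
let `δ' : Q × (Σ − {x₀}) → Q × (Γ − {y₀})` be the resulting move function (i.e. for each
`(q, x)` some iterate of the feedback step starting from `δ (q, x)` equals `δ' (q, x)`,
whose output component differs from `y₀`).  Then `δ'` is injective. -/
theorem feedback_move_function_injective
    (Q Sigma Gamma : Type) [Fintype Q] [Fintype Sigma] [Fintype Gamma]
    [DecidableEq Gamma] (k : ℕ) (hk : 3 ≤ k)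
    (hQ : Fintype.card Q = 2) (hS : Fintype.card Sigma = k)
    (hG : Fintype.card Gamma = k)
    (δ : Q × Sigma → Q × Gamma) (hδ : Function.Bijective δ)
    (x₀ : Sigma) (y₀ : Gamma)
    (δ' : Q × {x : Sigma // x ≠ x₀} → Q × {y : Gamma // y ≠ y₀})
    (hspec : ∀ (q : Q) (x : {x : Sigma // x ≠ x₀}), ∃ n : ℕ,
      (fbStep δ y₀ x₀)^[n] (δ (q, x.val)) = ((δ' (q, x)).1, (δ' (q, x)).2.val)) :
    Function.Injective δ' :=
  feedback_move_function_injective_general Q Sigma Gamma δ hδ x₀ y₀ δ' hspec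
end
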